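/- arXiv:1905.03141 — 2 statements merged into one kernel-verified Lean document; each statement's English description precedes it below -/
import Mathlib

section
/- For every integer n ≥ 1, max{ψ(a), ψ(a+1)} ≤ √(n+1), where a = ⌊(n+1)/2 − √(n+1)/2⌋ and ψ(t) = (2√n/(n+1))·√(t(n+1−t)) + |1 − 2t/(n+1)|. -/
/-!
On `[0, N]` with `N = m + 1`, the two quantities `u = 2√(t(N - t))/N` and `v = |1 - 2t/N|`
satisfy `u² + v² = 1`, so by Cauchy–Schwarz `√m · u + 1 · v ≤ √(m + 1)`. Both `a` and `a + 1`
lie in `[0, N]`, since `√N ≤ N`.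
-/

open Real

lemma mul_add_mul_le_sqrt_mul_sqrt (x y u v : ℝ) :
    x * u + y * v ≤ √(x ^ 2 + y ^ 2) * √(u ^ 2 + v ^ 2) := by
  simpa [Fin.sum_univ_two] using
    Real.sum_mul_le_sqrt_mul_sqrt Finset.univ ![x, y] ![u, v]

lemma sq_add_sq_eq_one_of_mem_Icc {N t : ℝ} (hN : 0 < N) (ht : t ∈ Set.Icc 0 N) :
    (2 * √(t * (N - t)) / N) ^ 2 + |1 - 2 * t / N| ^ 2 = 1 := by
  have hprod : 0 ≤ t * (N - t) := mul_nonneg ht.1 (sub_nonneg.2 ht.2)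
  rw [div_pow, mul_pow, sq_sqrt hprod, sq_abs]
  field_simp
  ring

lemma psi_le_sqrt {m t : ℝ} (hm : 0 ≤ m) (ht : t ∈ Set.Icc 0 (m + 1)) :
    (2 * √m / (m + 1)) * √(t * (m + 1 - t)) + |1 - 2 * t / (m + 1)| ≤ √(m + 1) := by
  have hN : 0 < m + 1 := by linarith
  calc (2 * √m / (m + 1)) * √(t * (m + 1 - t)) + |1 - 2 * t / (m + 1)|
      = √m * (2 * √(t * (m + 1 - t)) / (m + 1)) + 1 * |1 - 2 * t / (m + 1)| := by ring
    _ ≤ √(√m ^ 2 + 1 ^ 2) *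
          √((2 * √(t * (m + 1 - t)) / (m + 1)) ^ 2 + |1 - 2 * t / (m + 1)| ^ 2) :=
        mul_add_mul_le_sqrt_mul_sqrt _ _ _ _
    _ = √(m + 1) := by
        rw [sq_add_sq_eq_one_of_mem_Icc hN ht, sq_sqrt hm, one_pow, sqrt_one, mul_one]

lemma floor_half_sub_sqrt_half_mem_Icc {N : ℝ} (hN : 1 ≤ N) :
    (⌊N / 2 - √N / 2⌋ : ℝ) ∈ Set.Icc 0 N ∧ (⌊N / 2 - √N / 2⌋ + 1 : ℝ) ∈ Set.Icc 0 N := by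
  have hsqrt_le : √N ≤ N := sqrt_le_self_iff.2 (Or.inr hN)
  have hone_le : 1 ≤ √N := one_le_sqrt.2 hN
  have hfloor_nonneg : (0 : ℝ) ≤ ⌊N / 2 - √N / 2⌋ :=
    Int.cast_nonneg_iff.2 (Int.floor_nonneg.2 (by linarith))
  have hfloor_le := Int.floor_le (N / 2 - √N / 2)
  refine ⟨⟨hfloor_nonneg, ?_⟩, ⟨?_, ?_⟩⟩ <;> linarith

theorem max_psi_le_sqrt_general (n : ℕ)
    (ψ : ℝ → ℝ)
    (hψ : ∀ t, ψ t = (2 * Real.sqrt n / (n + 1)) * Real.sqrt (t * (n + 1 - t))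
        + |1 - 2 * t / (n + 1)|)
    (a : ℤ) (ha : a = ⌊((n : ℝ) + 1) / 2 - Real.sqrt (n + 1) / 2⌋) :
    max (ψ a) (ψ (a + 1)) ≤ Real.sqrt (n + 1) := by
  have hn : (0 : ℝ) ≤ n := n.cast_nonneg
  obtain ⟨ha_mem, ha_succ_mem⟩ := floor_half_sub_sqrt_half_mem_Icc (N := (n : ℝ) + 1) (by linarith)
  rw [← ha] at ha_mem ha_succ_mem
  rw [hψ, hψ]
  exact max_le (psi_le_sqrt hn ha_mem) (psi_le_sqrt hn ha_succ_mem)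

theorem max_psi_le_sqrt (n : ℕ) (hn : 1 ≤ n)
    (ψ : ℝ → ℝ)
    (hψ : ∀ t, ψ t = (2 * Real.sqrt n / (n + 1)) * Real.sqrt (t * (n + 1 - t))
        + |1 - 2 * t / (n + 1)|)
    (a : ℤ) (ha : a = ⌊((n : ℝ) + 1) / 2 - Real.sqrt (n + 1) / 2⌋) :
    max (ψ a) (ψ (a + 1)) ≤ Real.sqrt (n + 1) :=
  max_psi_le_sqrt_general n ψ hψ a ha
end

section
/- For a positive integer n, max{ψ(a), ψ(a+1)} = √(n+1) (with a = ⌊(n+1)/2 − √(n+1)/2⌋) if and only if n + 1 is a perfect square. -/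
/-!
On `[0, n+1]` write `ψ t = (2√n·x + v)/(n+1)` with `x = √(t(n+1-t))` and `v = |n+1-2t|`. Since
`4x² + v² = (n+1)²` and `n + 1 = (√n)² + 1`, Cauchy–Schwarz gives `ψ t ≤ √(n+1)`, with equality
iff `(2x, v)` is proportional to `(√n, 1)`, i.e. iff `|n+1-2t| = √(n+1)`. Both `a` and `a+1` lie in
`[0, n+1]`, so the maximum equals `√(n+1)` only if `√(n+1)` is the absolute value of an integer.
Conversely, if `n + 1 = m²` then `(m² - m)/2` is an integer, so `a = (m² - m)/2` and `ψ a = √(n+1)`.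
-/

noncomputable def psi (n t : ℝ) : ℝ :=
  2 * √n / (n + 1) * √(t * (n + 1 - t)) + |1 - 2 * t / (n + 1)|

section
variable {n t : ℝ}

lemma psi_eq_div (hn : 0 ≤ n) (t : ℝ) :
    psi n t = (2 * √n * √(t * (n + 1 - t)) + |n + 1 - 2 * t|) / (n + 1) := by
  have hN : 0 < n + 1 := by linarith
  rw [psi, show 1 - 2 * t / (n + 1) = (n + 1 - 2 * t) / (n + 1) by field_simp, abs_div,
    abs_of_pos hN]
  ring

lemma psi_le_sqrt_and_eq_iff (hn : 0 ≤ n) (ht₀ : 0 ≤ t) (ht₁ : t ≤ n + 1) :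
    psi n t ≤ √(n + 1) ∧ (psi n t = √(n + 1) ↔ |n + 1 - 2 * t| = √(n + 1)) := by
  have hN : 0 < n + 1 := by linarith
  rw [psi_eq_div hn, div_le_iff₀ hN, div_eq_iff hN.ne']
  set r := √n
  set s := √(n + 1)
  set x := √(t * (n + 1 - t))
  set v := |n + 1 - 2 * t|
  have hr : r ^ 2 = n := Real.sq_sqrt hn
  have hs : s ^ 2 = n + 1 := Real.sq_sqrt hN.le
  have hxv : 4 * x ^ 2 + v ^ 2 = (n + 1) ^ 2 := by
    rw [Real.sq_sqrt (by nlinarith), sq_abs]; ring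
  have hr₀ : 0 ≤ r := Real.sqrt_nonneg _
  have hs₀ : 0 ≤ s := Real.sqrt_nonneg _
  have hx₀ : 0 ≤ x := Real.sqrt_nonneg _
  have hv₀ : 0 ≤ v := abs_nonneg _
  have lagrange : (2 * r * x + v) ^ 2 + (r * v - 2 * x) ^ 2 = (s * (n + 1)) ^ 2 := by
    linear_combination (r ^ 2 + 1) * hxv + (n + 1) ^ 2 * hr - (n + 1) ^ 2 * hs
  refine ⟨?_, fun h ↦ ?_, fun h ↦ ?_⟩
  · exact le_of_sq_le_sq (by nlinarith [sq_nonneg (r * v - 2 * x)]) (by positivity)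
  · have h2x : 2 * x = r * v := by
      have : (r * v - 2 * x) ^ 2 = 0 := by rw [h] at lagrange; linarith
      linarith [pow_eq_zero_iff (n := 2) two_ne_zero |>.1 this]
    have : (n + 1) * v ^ 2 = (n + 1) * s ^ 2 := by
      linear_combination hxv - (2 * x + r * v) * h2x - v ^ 2 * hr - (n + 1) * hs
    exact (sq_eq_sq₀ hv₀ hs₀).1 (mul_left_cancel₀ hN.ne' this)
  · have h2x : 2 * x = r * s := by
      refine (sq_eq_sq₀ (by positivity) (by positivity)).1 ?_
      linear_combination hxv - (v + s) * h - s ^ 2 * hr - (n + 1) * hs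
    linear_combination r * h2x + h + s * hr
end

lemma floor_half_sub_sqrt_bounds {N : ℝ} (hN : 1 ≤ N) :
    0 ≤ (⌊N / 2 - √N / 2⌋ : ℝ) ∧ (⌊N / 2 - √N / 2⌋ : ℝ) + 1 ≤ N := by
  have hs₁ : 1 ≤ √N := Real.one_le_sqrt.2 hN
  have hsN : √N ≤ N := by nlinarith [Real.sq_sqrt (zero_le_one.trans hN)]
  have hfl := Int.floor_le (N / 2 - √N / 2)
  exact ⟨mod_cast Int.floor_nonneg.2 (by linarith), by linarith⟩

lemma floor_half_sq_sub_half (m : ℕ) :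
    (⌊(m : ℝ) ^ 2 / 2 - m / 2⌋ : ℝ) = (m : ℝ) ^ 2 / 2 - m / 2 := by
  obtain ⟨c, hc⟩ := Int.even_mul_pred_self (m : ℤ)
  have hc' : (m : ℝ) ^ 2 / 2 - m / 2 = c := by
    linear_combination (1 / 2 : ℝ) * (by exact_mod_cast hc : ((m : ℝ) * (m - 1)) = c + c)
  rw [hc', Int.floor_intCast]

lemma exists_sq_of_abs_intCast_eq_sqrt {N : ℕ} {k : ℤ} (h : |(k : ℝ)| = √(N : ℝ)) :
    ∃ m : ℕ, N = m ^ 2 := by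
  refine ⟨k.natAbs, ?_⟩
  have : (N : ℝ) = (k.natAbs : ℝ) ^ 2 := by
    rw [Nat.cast_natAbs, Int.cast_abs, h, Real.sq_sqrt (Nat.cast_nonneg N)]
  exact_mod_cast this

theorem max_psi_eq_sqrt_iff_general (n : ℕ)
    (ψ : ℝ → ℝ)
    (hψ : ∀ t, ψ t = (2 * Real.sqrt n / (n + 1)) * Real.sqrt (t * (n + 1 - t))
        + |1 - 2 * t / (n + 1)|)
    (a : ℤ) (ha : a = ⌊((n : ℝ) + 1) / 2 - Real.sqrt (n + 1) / 2⌋) :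
    max (ψ a) (ψ (a + 1)) = Real.sqrt (n + 1) ↔ ∃ m : ℕ, n + 1 = m ^ 2 := by
  obtain rfl : ψ = psi n := funext hψ
  have hn : (0 : ℝ) ≤ n := n.cast_nonneg
  obtain ⟨ha₀, ha₁⟩ := floor_half_sub_sqrt_bounds (N := (n : ℝ) + 1) (by linarith)
  rw [← ha] at ha₀ ha₁
  have hψa := psi_le_sqrt_and_eq_iff hn ha₀ (by linarith)
  have hψa₁ := psi_le_sqrt_and_eq_iff (t := a + 1) hn (by linarith) ha₁
  rw [max_eq_iff]
  constructor
  · rintro (⟨h, -⟩ | ⟨h, -⟩)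
    · exact exists_sq_of_abs_intCast_eq_sqrt (k := n + 1 - 2 * a) (by push_cast; exact hψa.2.1 h)
    · exact exists_sq_of_abs_intCast_eq_sqrt (k := n + 1 - 2 * (a + 1))
        (by push_cast; exact hψa₁.2.1 h)
  · rintro ⟨m, hm⟩
    have hN : (n : ℝ) + 1 = (m : ℝ) ^ 2 := by exact_mod_cast hm
    have hs : √((n : ℝ) + 1) = m := by rw [hN, Real.sqrt_sq m.cast_nonneg]
    have haR : (a : ℝ) = (m : ℝ) ^ 2 / 2 - m / 2 := by
      rw [ha, hs, hN, floor_half_sq_sub_half]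
    have hv : (n : ℝ) + 1 - 2 * a = m := by rw [haR, hN]; ring
    have h : psi n a = √(n + 1) := hψa.2.2 (by rw [hv, hs, abs_of_nonneg m.cast_nonneg])
    exact Or.inl ⟨h, h ▸ hψa₁.1⟩

theorem max_psi_eq_sqrt_iff (n : ℕ) (hn : 1 ≤ n)
    (ψ : ℝ → ℝ)
    (hψ : ∀ t, ψ t = (2 * Real.sqrt n / (n + 1)) * Real.sqrt (t * (n + 1 - t))
        + |1 - 2 * t / (n + 1)|)
    (a : ℤ) (ha : a = ⌊((n : ℝ) + 1) / 2 - Real.sqrt (n + 1) / 2⌋) :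
    max (ψ a) (ψ (a + 1)) = Real.sqrt (n + 1) ↔ ∃ m : ℕ, n + 1 = m ^ 2 :=
  max_psi_eq_sqrt_iff_general n ψ hψ a ha
end
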